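/- arXiv:1701.05874 — 3 statements merged into one kernel-verified Lean document; each statement's English description precedes it below -/
import Mathlib

section
/- Let (i,p,K) be induction data from a cochain complex (C,d) to (C',d'), i.e. p∘i = id, d∘i = i∘d', p∘d = d'∘p, d∘K + K∘d = id − i∘p, K∘i = 0, p∘K = 0, K∘K = 0. Let δ : C → C be a degree-1 map with (d+δ)² = 0, and suppose (id + K∘δ) is invertible (e.g. δ∘K is nilpotent). Then d' + p∘(δ − δKδ + δKδKδ − ⋯)∘i is a differential on C' (squares to zero), and the maps i' = i − Kδi + KδKδi − ⋯, p' = p − pδK + pδKδK − ⋯, K' = K − KδK + KδKδK − ⋯ form induction data from (C, d+δ) to (C', d' + p(δ − δKδ + ⋯)i). -/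
/-- Homological perturbation lemma (Gugenheim–Lambe): given induction data `(i, p, K)`
from `(C, d)` to `(C', d')` and a perturbation `δ` with `(d+δ)² = 0` such that
`id + K∘δ` is invertible (with inverse `g`, so that the geometric series
`δ - δKδ + δKδKδ - ⋯ = δ∘g` converges), the perturbed differential
`d' + p(δ - δKδ + ⋯)i = d' + p∘δ∘g∘i` squares to zero and the perturbed maps
`i' = g∘i = i - Kδi + ⋯`, `p' = p∘(id - δ∘g∘K) = p - pδK + ⋯`, `K' = g∘K = K - KδK + ⋯`
form induction data from `(C, d+δ)` to `(C', d' + pδgi)`. -/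
theorem homological_perturbation_lemma
    {C C' : Type*} [AddCommGroup C] [Module ℝ C] [AddCommGroup C'] [Module ℝ C']
    (d : C →ₗ[ℝ] C) (d' : C' →ₗ[ℝ] C')
    (i : C' →ₗ[ℝ] C) (p : C →ₗ[ℝ] C') (K : C →ₗ[ℝ] C)
    (hd : d ∘ₗ d = 0) (hd' : d' ∘ₗ d' = 0)
    (hpi : p ∘ₗ i = LinearMap.id)
    (hdi : d ∘ₗ i = i ∘ₗ d')
    (hpd : p ∘ₗ d = d' ∘ₗ p)
    (hK : d ∘ₗ K + K ∘ₗ d = LinearMap.id - i ∘ₗ p)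
    (hKi : K ∘ₗ i = 0) (hpK : p ∘ₗ K = 0) (hKK : K ∘ₗ K = 0)
    (δ : C →ₗ[ℝ] C)
    (hδ : (d + δ) ∘ₗ (d + δ) = 0)
    (g : C →ₗ[ℝ] C)
    (hg1 : g ∘ₗ (LinearMap.id + K ∘ₗ δ) = LinearMap.id)
    (hg2 : (LinearMap.id + K ∘ₗ δ) ∘ₗ g = LinearMap.id) :
    ((d' + p ∘ₗ (δ ∘ₗ g) ∘ₗ i) ∘ₗ (d' + p ∘ₗ (δ ∘ₗ g) ∘ₗ i) = 0) ∧
    ((p ∘ₗ (LinearMap.id - δ ∘ₗ g ∘ₗ K)) ∘ₗ (g ∘ₗ i) = LinearMap.id) ∧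
    ((d + δ) ∘ₗ (g ∘ₗ i) = (g ∘ₗ i) ∘ₗ (d' + p ∘ₗ (δ ∘ₗ g) ∘ₗ i)) ∧
    ((p ∘ₗ (LinearMap.id - δ ∘ₗ g ∘ₗ K)) ∘ₗ (d + δ)
      = (d' + p ∘ₗ (δ ∘ₗ g) ∘ₗ i) ∘ₗ (p ∘ₗ (LinearMap.id - δ ∘ₗ g ∘ₗ K))) ∧
    ((d + δ) ∘ₗ (g ∘ₗ K) + (g ∘ₗ K) ∘ₗ (d + δ)
      = LinearMap.id - (g ∘ₗ i) ∘ₗ (p ∘ₗ (LinearMap.id - δ ∘ₗ g ∘ₗ K))) ∧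
    ((g ∘ₗ K) ∘ₗ (g ∘ₗ i) = 0) ∧
    ((p ∘ₗ (LinearMap.id - δ ∘ₗ g ∘ₗ K)) ∘ₗ (g ∘ₗ K) = 0) ∧
    ((g ∘ₗ K) ∘ₗ (g ∘ₗ K) = 0) := by
  -- pass to the endomorphism ring
  have hdd : d * d = 0 := hd
  have hKK' : K * K = 0 := hKK
  have hgL : g * (1 + K * δ) = 1 := hg1
  have hgR : (1 + K * δ) * g = 1 := hg2
  have hZ1 : d * K + K * d - 1 + i ∘ₗ p = 0 := by
    have h : d * K + K * d = 1 - i ∘ₗ p := hK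
    rw [h]; abel
  have hZ9 : d * δ + δ * d + δ * δ = 0 := by
    have h : (d + δ) * (d + δ) = 0 := hδ
    have h2 : d * d + (d * δ + δ * d + δ * δ) = 0 := by rw [← h]; noncomm_ring
    rw [hdd] at h2; simpa using h2
  have hZg : g - 1 + K * (δ * g) = 0 := by
    have h : g + K * (δ * g) = 1 := by
      have : g + K * (δ * g) = (1 + K * δ) * g := by noncomm_ring
      rw [this, hgR]
    rw [← h]; abel
  have hZ6 : δ * K * (δ * g) - δ + δ * g = 0 := by
    have h : δ * K * (δ * g) - δ + δ * g = δ * ((1 + K * δ) * g) - δ := by noncomm_ring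
    rw [h, hgR]; simp
  have hZ7 : (δ * g) * K * δ - δ + δ * g = 0 := by
    have h : (δ * g) * K * δ - δ + δ * g = δ * (g * (1 + K * δ)) - δ := by noncomm_ring
    rw [h, hgL]; simp
  have hhL : (1 - (δ * g) * K) * (1 + δ * K) = 1 := by
    have h : (1 - (δ * g) * K) * (1 + δ * K)
        = 1 - ((δ * g) * K * δ - δ + δ * g) * K := by noncomm_ring
    rw [h, hZ7]; simp
  have hM : (1 + δ * K) * (d * (δ * g) + (δ * g) * d + (δ * g) * ((i ∘ₗ p) * (δ * g)))
      * (1 + K * δ) = 0 := by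
    have h : (1 + δ * K) * (d * (δ * g) + (δ * g) * d + (δ * g) * ((i ∘ₗ p) * (δ * g)))
        * (1 + K * δ)
        = (d * δ + δ * d + δ * δ) + δ * (d * K + K * d - 1 + i ∘ₗ p) * δ
          + (1 + δ * K) * d * ((δ * g) * K * δ - δ + δ * g)
          + (δ * K * (δ * g) - δ + δ * g) * (d * (1 + K * δ))
          + (δ * K * (δ * g) - δ + δ * g) * (i ∘ₗ p) * ((δ * g) * K * δ - δ + δ * g)
          + (δ * K * (δ * g) - δ + δ * g) * (i ∘ₗ p) * δ
          + δ * (i ∘ₗ p) * ((δ * g) * K * δ - δ + δ * g) := by noncomm_ring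
    rw [h, hZ6, hZ7, hZ9, hZ1]; simp
  have hstar : d * (δ * g) + (δ * g) * d + (δ * g) * ((i ∘ₗ p) * (δ * g)) = 0 := by
    calc d * (δ * g) + (δ * g) * d + (δ * g) * ((i ∘ₗ p) * (δ * g))
        = (1 - (δ * g) * K)
            * ((1 + δ * K)
              * (d * (δ * g) + (δ * g) * d + (δ * g) * ((i ∘ₗ p) * (δ * g)))
              * (1 + K * δ)) * g := by
          rw [show (1 - (δ * g) * K)
              * ((1 + δ * K)
                * (d * (δ * g) + (δ * g) * d + (δ * g) * ((i ∘ₗ p) * (δ * g)))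
                * (1 + K * δ)) * g
            = ((1 - (δ * g) * K) * (1 + δ * K))
              * (d * (δ * g) + (δ * g) * d + (δ * g) * ((i ∘ₗ p) * (δ * g)))
              * ((1 + K * δ) * g) from by noncomm_ring, hhL, hgR]
          simp
      _ = 0 := by rw [hM]; simp
  have hKg : K * g = K := by
    have hc : K * g - K = -((K * K) * (δ * g)) + K * (g - 1 + K * (δ * g)) := by noncomm_ring
    rw [hKK', hZg] at hc
    simp only [zero_mul, mul_zero, neg_zero, add_zero, zero_add] at hc
    exact sub_eq_zero.mp hc
  have T3 : (d + δ) * g = g * d + g * ((i ∘ₗ p) * (δ * g)) := by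
    have hc : (d + δ) * g - (g * d + g * ((i ∘ₗ p) * (δ * g)))
        = K * (d * (δ * g) + (δ * g) * d + (δ * g) * ((i ∘ₗ p) * (δ * g)))
          - (d * K + K * d - 1 + i ∘ₗ p) * (δ * g)
          + d * (g - 1 + K * (δ * g))
          - (g - 1 + K * (δ * g)) * d
          - (g - 1 + K * (δ * g)) * ((i ∘ₗ p) * (δ * g)) := by noncomm_ring
    rw [hstar, hZ1, hZg] at hc
    simp only [mul_zero, zero_mul, sub_zero, zero_sub, neg_zero, add_zero] at hc
    exact sub_eq_zero.mp hc
  have T4 : (1 - (δ * g) * K) * (d + δ)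
      = d * (1 - (δ * g) * K) + (δ * g) * ((i ∘ₗ p) * (1 - (δ * g) * K)) := by
    have hc : (1 - (δ * g) * K) * (d + δ)
        - (d * (1 - (δ * g) * K) + (δ * g) * ((i ∘ₗ p) * (1 - (δ * g) * K)))
        = (d * (δ * g) + (δ * g) * d + (δ * g) * ((i ∘ₗ p) * (δ * g))) * K
          - (δ * g) * (d * K + K * d - 1 + i ∘ₗ p)
          - ((δ * g) * K * δ - δ + δ * g) := by noncomm_ring
    rw [hstar, hZ1, hZ7] at hc
    simp only [mul_zero, zero_mul, sub_zero, zero_sub, neg_zero, add_zero] at hc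
    exact sub_eq_zero.mp hc
  have T5 : (d + δ) * (g * K) + (g * K) * (d + δ)
      = 1 - g * ((i ∘ₗ p) * (1 - (δ * g) * K)) := by
    have hc : (d + δ) * (g * K) + (g * K) * (d + δ)
        - (1 - g * ((i ∘ₗ p) * (1 - (δ * g) * K)))
        = (d * K + K * d - 1 + i ∘ₗ p)
          + K * (d * (δ * g) + (δ * g) * d + (δ * g) * ((i ∘ₗ p) * (δ * g))) * K
          - (δ * K * (δ * g) - δ + δ * g) * K
          - K * ((δ * g) * K * δ - δ + δ * g)
          - (d * K + K * d - 1 + i ∘ₗ p) * ((δ * g) * K)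
          - K * (δ * g) * (d * K + K * d - 1 + i ∘ₗ p)
          + (d + δ) * ((g - 1 + K * (δ * g)) * K)
          + ((g - 1 + K * (δ * g)) * K) * (d + δ)
          + (g - 1 + K * (δ * g)) * ((i ∘ₗ p) * (1 - (δ * g) * K)) := by noncomm_ring
    rw [hstar, hZ1, hZ6, hZ7, hZg] at hc
    simp only [mul_zero, zero_mul, sub_zero, zero_sub, neg_zero, add_zero, neg_neg,
      zero_add] at hc
    exact sub_eq_zero.mp hc
  -- pointwise and auxiliary composition facts
  have hpg : p ∘ₗ g = p := by
    ext x
    have h := DFunLike.congr_fun hZg x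
    simp only [LinearMap.add_apply, LinearMap.sub_apply, Module.End.mul_apply,
      Module.End.one_apply, LinearMap.zero_apply] at h
    rw [sub_add_eq_add_sub, sub_eq_zero] at h
    have hpK0 : ∀ y, p (K y) = 0 := fun y => DFunLike.congr_fun hpK y
    simp only [LinearMap.comp_apply]
    conv_rhs => rw [← h]
    simp [map_add, hpK0]
  have h1 : (1 - (δ * g) * K) * g = g - (δ * g) * K := by
    have h : (1 - (δ * g) * K) * g = g - (δ * g) * (K * g) := by noncomm_ring
    rw [hKg] at h; exact h
  have hpi0 : ∀ x, p (i x) = x := fun x => DFunLike.congr_fun hpi x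
  have hKi0 : ∀ x, K (i x) = 0 := fun x => DFunLike.congr_fun hKi x
  have hpK0 : ∀ x, p (K x) = 0 := fun x => DFunLike.congr_fun hpK x
  have hKK0 : ∀ x, K (K x) = 0 := fun x => DFunLike.congr_fun hKK x
  have hKg0 : ∀ x, K (g x) = K x := fun x => DFunLike.congr_fun hKg x
  have hpg0 : ∀ x, p (g x) = p x := fun x => DFunLike.congr_fun hpg x
  refine ⟨?_, ?_, ?_, ?_, ?_, ?_, ?_, ?_⟩
  · -- goal 1 : perturbed differential squares to zero
    have hA : d' ∘ₗ (p ∘ₗ (δ ∘ₗ g) ∘ₗ i) = p ∘ₗ ((d * (δ * g)) ∘ₗ i) := by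
      show (d' ∘ₗ p) ∘ₗ ((δ ∘ₗ g) ∘ₗ i) = (p ∘ₗ d) ∘ₗ ((δ ∘ₗ g) ∘ₗ i)
      rw [hpd]
    have hB : (p ∘ₗ (δ ∘ₗ g) ∘ₗ i) ∘ₗ d' = p ∘ₗ (((δ * g) * d) ∘ₗ i) := by
      show (p ∘ₗ (δ ∘ₗ g)) ∘ₗ (i ∘ₗ d') = (p ∘ₗ (δ ∘ₗ g)) ∘ₗ (d ∘ₗ i)
      rw [hdi]
    have hC : (p ∘ₗ (δ ∘ₗ g) ∘ₗ i) ∘ₗ (p ∘ₗ (δ ∘ₗ g) ∘ₗ i)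
        = p ∘ₗ (((δ * g) * ((i ∘ₗ p) * (δ * g))) ∘ₗ i) := rfl
    calc (d' + p ∘ₗ (δ ∘ₗ g) ∘ₗ i) ∘ₗ (d' + p ∘ₗ (δ ∘ₗ g) ∘ₗ i)
        = d' ∘ₗ d' + (d' ∘ₗ (p ∘ₗ (δ ∘ₗ g) ∘ₗ i)
            + ((p ∘ₗ (δ ∘ₗ g) ∘ₗ i) ∘ₗ d'
              + (p ∘ₗ (δ ∘ₗ g) ∘ₗ i) ∘ₗ (p ∘ₗ (δ ∘ₗ g) ∘ₗ i))) := by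
          simp only [LinearMap.add_comp, LinearMap.comp_add]; try abel
      _ = p ∘ₗ ((d * (δ * g)) ∘ₗ i) + (p ∘ₗ (((δ * g) * d) ∘ₗ i)
            + p ∘ₗ (((δ * g) * ((i ∘ₗ p) * (δ * g))) ∘ₗ i)) := by
          rw [hd', hA, hB, hC, zero_add]
      _ = p ∘ₗ ((d * (δ * g) + (δ * g) * d + (δ * g) * ((i ∘ₗ p) * (δ * g))) ∘ₗ i) := by
          simp only [LinearMap.add_comp, LinearMap.comp_add]; try abel
      _ = 0 := by rw [hstar]; simp
  · -- goal 2 : p' ∘ i' = id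
    ext x
    simp [hKg0, hKi0, hpg0, hpi0]
  · -- goal 3 : (d+δ) ∘ i' = i' ∘ d''
    calc (d + δ) ∘ₗ (g ∘ₗ i)
        = ((d + δ) * g) ∘ₗ i := rfl
      _ = (g * d + g * ((i ∘ₗ p) * (δ * g))) ∘ₗ i := by rw [T3]
      _ = g ∘ₗ (d ∘ₗ i) + (g ∘ₗ i) ∘ₗ (p ∘ₗ (δ ∘ₗ g) ∘ₗ i) := by
          ext x; simp
      _ = g ∘ₗ (i ∘ₗ d') + (g ∘ₗ i) ∘ₗ (p ∘ₗ (δ ∘ₗ g) ∘ₗ i) := by rw [hdi]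
      _ = (g ∘ₗ i) ∘ₗ (d' + p ∘ₗ (δ ∘ₗ g) ∘ₗ i) := by ext x; simp
  · -- goal 4 : p' ∘ (d+δ) = d'' ∘ p'
    calc (p ∘ₗ (LinearMap.id - δ ∘ₗ g ∘ₗ K)) ∘ₗ (d + δ)
        = p ∘ₗ ((1 - (δ * g) * K) * (d + δ)) := by ext x; simp
      _ = p ∘ₗ (d * (1 - (δ * g) * K)
            + (δ * g) * ((i ∘ₗ p) * (1 - (δ * g) * K))) := by rw [T4]
      _ = (p ∘ₗ d) ∘ₗ (1 - (δ * g) * K)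
            + (p ∘ₗ (δ ∘ₗ g) ∘ₗ i) ∘ₗ (p ∘ₗ (LinearMap.id - δ ∘ₗ g ∘ₗ K)) := by
          ext x; simp
      _ = (d' ∘ₗ p) ∘ₗ (1 - (δ * g) * K)
            + (p ∘ₗ (δ ∘ₗ g) ∘ₗ i) ∘ₗ (p ∘ₗ (LinearMap.id - δ ∘ₗ g ∘ₗ K)) := by
          rw [hpd]
      _ = (d' + p ∘ₗ (δ ∘ₗ g) ∘ₗ i) ∘ₗ (p ∘ₗ (LinearMap.id - δ ∘ₗ g ∘ₗ K)) := by
          ext x; simp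
  · -- goal 5 : homotopy identity
    exact T5
  · -- goal 6 : K' ∘ i' = 0
    calc (g ∘ₗ K) ∘ₗ (g ∘ₗ i) = g ∘ₗ ((K * g) ∘ₗ i) := rfl
      _ = 0 := by rw [hKg, hKi]; simp
  · -- goal 7 : p' ∘ K' = 0
    ext x
    simp [hKg0, hKK0, hpg0, hpK0]
  · -- goal 8 : K' ∘ K' = 0
    calc (g ∘ₗ K) ∘ₗ (g ∘ₗ K) = g ∘ₗ ((K * g) ∘ₗ K) := rfl
      _ = 0 := by rw [hKg, hKK]; simp
end

section
/- Let (C,d) be a cochain complex of finite-dimensional vector spaces equipped with induction data (i,p,K) to a retract (C',d'). Then C decomposes as a direct sum C = i(C') ⊕ (ker p ∩ im d) ⊕ im K, i.e. every element x ∈ C can be written uniquely as x = i(p(x)) + (d∘K)(x) + (K∘d)(x), where i(p(x)) ∈ i(C'), dK(x) ∈ ker p ∩ im d, and Kd(x) ∈ im K, and these three subspaces intersect pairwise trivially. -/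
/-- Formal Hodge decomposition induced by induction data: for a retraction
`(i, p, K)` from `(C, d)` to `(C', d')`, every `x ∈ C` decomposes uniquely as
`x = i(p x) + dK(x) + Kd(x)` with `i(p x) ∈ i(C')`, `dK(x) ∈ ker p ∩ im d`,
`Kd(x) ∈ im K`, and the three subspaces intersect pairwise trivially. -/
theorem hodge_decomposition_from_induction_data
    {C C' : Type*} [AddCommGroup C] [Module ℝ C] [AddCommGroup C'] [Module ℝ C']
    (d : C →ₗ[ℝ] C) (d' : C' →ₗ[ℝ] C')
    (i : C' →ₗ[ℝ] C) (p : C →ₗ[ℝ] C') (K : C →ₗ[ℝ] C)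
    (hd : d ∘ₗ d = 0) (hd' : d' ∘ₗ d' = 0)
    (hpi : p ∘ₗ i = LinearMap.id)
    (hdi : d ∘ₗ i = i ∘ₗ d')
    (hpd : p ∘ₗ d = d' ∘ₗ p)
    (hK : d ∘ₗ K + K ∘ₗ d = LinearMap.id - i ∘ₗ p)
    (hKi : K ∘ₗ i = 0) (hpK : p ∘ₗ K = 0) (hKK : K ∘ₗ K = 0) :
    (∀ x : C, x = i (p x) + d (K x) + K (d x)) ∧
    (∀ x : C, i (p x) ∈ LinearMap.range i) ∧
    (∀ x : C, d (K x) ∈ LinearMap.ker p ⊓ LinearMap.range d) ∧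
    (∀ x : C, K (d x) ∈ LinearMap.range K) ∧
    (LinearMap.range i ⊓ (LinearMap.ker p ⊓ LinearMap.range d) = ⊥) ∧
    (LinearMap.range i ⊓ LinearMap.range K = ⊥) ∧
    ((LinearMap.ker p ⊓ LinearMap.range d) ⊓ LinearMap.range K = ⊥) ∧
    (∀ x a b c : C, a ∈ LinearMap.range i → b ∈ LinearMap.ker p ⊓ LinearMap.range d →
      c ∈ LinearMap.range K → x = a + b + c →
      a = i (p x) ∧ b = d (K x) ∧ c = K (d x)) := by
  have hKpt : ∀ x : C, d (K x) + K (d x) = x - i (p x) := fun x => by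
    simpa using LinearMap.congr_fun hK x
  have hpipt : ∀ y : C', p (i y) = y := fun y => by
    simpa using LinearMap.congr_fun hpi y
  have hpKpt : ∀ x : C, p (K x) = 0 := fun x => by
    simpa using LinearMap.congr_fun hpK x
  have hKKpt : ∀ x : C, K (K x) = 0 := fun x => by
    simpa using LinearMap.congr_fun hKK x
  have hKipt : ∀ y : C', K (i y) = 0 := fun y => by
    simpa using LinearMap.congr_fun hKi y
  have hddpt : ∀ x : C, d (d x) = 0 := fun x => by
    simpa using LinearMap.congr_fun hd x
  have hdipt : ∀ y : C', d (i y) = i (d' y) := fun y => by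
    simpa using LinearMap.congr_fun hdi y
  have hpdpt : ∀ x : C, p (d x) = d' (p x) := fun x => by
    simpa using LinearMap.congr_fun hpd x
  have hdecomp : ∀ x : C, x = i (p x) + d (K x) + K (d x) := by
    intro x
    rw [add_assoc, hKpt x]; abel
  refine ⟨hdecomp, fun x => ⟨p x, rfl⟩, ?_, fun x => ⟨d x, rfl⟩, ?_, ?_, ?_, ?_⟩
  · intro x
    refine ⟨?_, ⟨K x, rfl⟩⟩
    simp [LinearMap.mem_ker, hpdpt, hpKpt]
  · -- range i ⊓ (ker p ⊓ range d) = ⊥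
    rw [eq_bot_iff]
    rintro x ⟨⟨y, rfl⟩, hpx, -⟩
    have : y = 0 := by simpa [hpipt] using hpx
    simp [this]
  · -- range i ⊓ range K = ⊥
    rw [eq_bot_iff]
    rintro x ⟨⟨y, rfl⟩, z, hz⟩
    have : y = 0 := by
      have := hpipt y
      rw [← hz] at this
      simpa [hpKpt] using this.symm
    simp [this]
  · -- (ker p ⊓ range d) ⊓ range K = ⊥
    rw [eq_bot_iff]
    rintro x ⟨⟨hpx, w, hw⟩, z, hz⟩
    have hKx : K x = 0 := by rw [← hz, hKKpt]
    have hdx : d x = 0 := by rw [← hw, hddpt]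
    have := hKpt x
    rw [hKx, hdx] at this
    simp only [map_zero, add_zero] at this
    have hx : x = i (p x) := by
      have := this.symm
      rwa [sub_eq_zero] at this
    rw [hpx] at hx
    simp [hx]
  · rintro x a b c ⟨y, rfl⟩ ⟨hpb, w, hw⟩ ⟨z, rfl⟩ hx
    have hpx : p x = y := by
      simp [hx, hpipt, hpb, hpKpt, LinearMap.mem_ker.mp hpb]
    have ha : i y = i (p x) := by rw [hpx]
    have hc : K z = K (d x) := by
      have hdb : d b = 0 := by rw [← hw, hddpt]
      have hdx : d x = d (i y) + d (K z) := by
        simp [hx, hdb]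
      have h1 : K (d x) = K (d (K z)) := by
        rw [hdx, map_add, hdipt, hKipt, zero_add]
      have h2 : d (K (K z)) + K (d (K z)) = K z - i (p (K z)) := hKpt (K z)
      rw [hKKpt, map_zero, zero_add, hpKpt, map_zero, sub_zero] at h2
      rw [h1, h2]
    refine ⟨ha, ?_, hc⟩
    have hb : b = x - i y - K z := by
      rw [hx]; abel
    rw [hb, ha, hc, ← hKpt x]; abel
end

section
/- (Gluing of induction data through a triangular perturbation.) Let (C_I, d_I) and (C_{II}, d_{II}) be finite cochain complexes with induction data (i_I, p_I, K_I) to H_I and (i_{II}, p_{II}, K_{II}) to H_{II}. Let φ : C_{II} → C_I be a degree +1 map with d_I φ + φ d_{II} = 0 (so that the block-upper-triangular matrix d = [[d_I, φ],[0, d_{II}]] is a differential on C_I ⊕ C_{II}). Then the maps i_c = [[i_I, −K_I φ i_{II}],[0, i_{II}]], p_c = [[p_I, −p_I φ K_{II}],[0, p_{II}]], K_c = [[K_I, −K_I φ K_{II}],[0, K_{II}]] form induction data from (C_I ⊕ C_{II}, d) to (H_I ⊕ H_{II}, 𝔇) with induced differential 𝔇 = [[0, p_I φ i_{II}],[0,0]],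 and all higher terms of the homological perturbation series vanish. -/
/-- A block-upper-triangular linear map `(x, y) ↦ (f x + g y, h y)`. -/
def blockUpper {R : Type*} [CommRing R] {A B C D : Type*}
    [AddCommGroup A] [Module R A] [AddCommGroup B] [Module R B]
    [AddCommGroup C] [Module R C] [AddCommGroup D] [Module R D]
    (f : A →ₗ[R] C) (g : B →ₗ[R] C) (h : B →ₗ[R] D) : (A × B) →ₗ[R] (C × D) :=
  LinearMap.prod (LinearMap.coprod f g) (h ∘ₗ LinearMap.snd R A B)

set_option maxHeartbeats 1000000

/-- Gluing of induction data through a triangular perturbation (homological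
perturbation for a strictly upper-triangular perturbation truncates at first
order): given retractions `(i_I, p_I, K_I) : (C_I, d_I) ⇝ H_I` and
`(i_II, p_II, K_II) : (C_II, d_II) ⇝ H_II` onto complexes with zero differential,
and a degree-one map `φ : C_II → C_I` with `d_I φ + φ d_II = 0`, the block maps
`i_c = [[i_I, −K_I φ i_II],[0, i_II]]`, `p_c = [[p_I, −p_I φ K_II],[0, p_II]]`,
`K_c = [[K_I, −K_I φ K_II],[0, K_II]]` form induction data from
`(C_I ⊕ C_II, d = [[d_I, φ],[0, d_II]])` to `(H_I ⊕ H_II, 𝔇 = [[0, p_I φ i_II],[0,0]])`. -/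
theorem gluing_induction_data_triangular
    {CI CII HI HII : Type*}
    [AddCommGroup CI] [Module ℝ CI] [AddCommGroup CII] [Module ℝ CII]
    [AddCommGroup HI] [Module ℝ HI] [AddCommGroup HII] [Module ℝ HII]
    (dI : CI →ₗ[ℝ] CI) (dII : CII →ₗ[ℝ] CII)
    (iI : HI →ₗ[ℝ] CI) (pI : CI →ₗ[ℝ] HI) (KI : CI →ₗ[ℝ] CI)
    (iII : HII →ₗ[ℝ] CII) (pII : CII →ₗ[ℝ] HII) (KII : CII →ₗ[ℝ] CII)
    (hdI : dI ∘ₗ dI = 0) (hdII : dII ∘ₗ dII = 0)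
    (hpiI : pI ∘ₗ iI = LinearMap.id) (hdiI : dI ∘ₗ iI = 0) (hpdI : pI ∘ₗ dI = 0)
    (hKI : dI ∘ₗ KI + KI ∘ₗ dI = LinearMap.id - iI ∘ₗ pI)
    (hKiI : KI ∘ₗ iI = 0) (hpKI : pI ∘ₗ KI = 0) (hKKI : KI ∘ₗ KI = 0)
    (hpiII : pII ∘ₗ iII = LinearMap.id) (hdiII : dII ∘ₗ iII = 0) (hpdII : pII ∘ₗ dII = 0)
    (hKII : dII ∘ₗ KII + KII ∘ₗ dII = LinearMap.id - iII ∘ₗ pII)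
    (hKiII : KII ∘ₗ iII = 0) (hpKII : pII ∘ₗ KII = 0) (hKKII : KII ∘ₗ KII = 0)
    (φ : CII →ₗ[ℝ] CI)
    (hφ : dI ∘ₗ φ + φ ∘ₗ dII = 0) :
    let dTot : (CI × CII) →ₗ[ℝ] (CI × CII) := blockUpper dI φ dII
    let 𝔇 : (HI × HII) →ₗ[ℝ] (HI × HII) := blockUpper 0 (pI ∘ₗ φ ∘ₗ iII) 0
    let ic : (HI × HII) →ₗ[ℝ] (CI × CII) := blockUpper iI (-(KI ∘ₗ φ ∘ₗ iII)) iII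
    let pc : (CI × CII) →ₗ[ℝ] (HI × HII) := blockUpper pI (-(pI ∘ₗ φ ∘ₗ KII)) pII
    let Kc : (CI × CII) →ₗ[ℝ] (CI × CII) := blockUpper KI (-(KI ∘ₗ φ ∘ₗ KII)) KII
    (dTot ∘ₗ dTot = 0) ∧
    (𝔇 ∘ₗ 𝔇 = 0) ∧
    (pc ∘ₗ ic = LinearMap.id) ∧
    (dTot ∘ₗ ic = ic ∘ₗ 𝔇) ∧
    (pc ∘ₗ dTot = 𝔇 ∘ₗ pc) ∧
    (dTot ∘ₗ Kc + Kc ∘ₗ dTot = LinearMap.id - ic ∘ₗ pc) ∧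
    (Kc ∘ₗ ic = 0) ∧
    (pc ∘ₗ Kc = 0) ∧
    (Kc ∘ₗ Kc = 0) := by
  have hdI' : ∀ x, dI (dI x) = 0 := fun x => by simpa using LinearMap.ext_iff.mp hdI x
  have hdII' : ∀ y, dII (dII y) = 0 := fun y => by simpa using LinearMap.ext_iff.mp hdII y
  have hpiI' : ∀ h, pI (iI h) = h := fun h => by simpa using LinearMap.ext_iff.mp hpiI h
  have hdiI' : ∀ h, dI (iI h) = 0 := fun h => by simpa using LinearMap.ext_iff.mp hdiI h
  have hpdI' : ∀ x, pI (dI x) = 0 := fun x => by simpa using LinearMap.ext_iff.mp hpdI x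
  have hKiI' : ∀ h, KI (iI h) = 0 := fun h => by simpa using LinearMap.ext_iff.mp hKiI h
  have hpKI' : ∀ x, pI (KI x) = 0 := fun x => by simpa using LinearMap.ext_iff.mp hpKI x
  have hKKI' : ∀ x, KI (KI x) = 0 := fun x => by simpa using LinearMap.ext_iff.mp hKKI x
  have hpiII' : ∀ h, pII (iII h) = h := fun h => by simpa using LinearMap.ext_iff.mp hpiII h
  have hdiII' : ∀ h, dII (iII h) = 0 := fun h => by simpa using LinearMap.ext_iff.mp hdiII h
  have hpdII' : ∀ y, pII (dII y) = 0 := fun y => by simpa using LinearMap.ext_iff.mp hpdII y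
  have hKiII' : ∀ h, KII (iII h) = 0 := fun h => by simpa using LinearMap.ext_iff.mp hKiII h
  have hpKII' : ∀ y, pII (KII y) = 0 := fun y => by simpa using LinearMap.ext_iff.mp hpKII y
  have hKKII' : ∀ y, KII (KII y) = 0 := fun y => by simpa using LinearMap.ext_iff.mp hKKII y
  have hKI' : ∀ x, dI (KI x) = x - iI (pI x) - KI (dI x) := fun x => by
    have := LinearMap.ext_iff.mp hKI x; simp at this
    rw [eq_sub_iff_add_eq, eq_sub_iff_add_eq]
    rw [show dI (KI x) + KI (dI x) + iI (pI x) = dI (KI x) + KI (dI x) + iI (pI x) from rfl]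
    rw [this]; abel
  have hKII' : ∀ y, dII (KII y) = y - iII (pII y) - KII (dII y) := fun y => by
    have := LinearMap.ext_iff.mp hKII y; simp at this
    rw [eq_sub_iff_add_eq, eq_sub_iff_add_eq, show dII (KII y) + KII (dII y) + iII (pII y)
      = dII (KII y) + KII (dII y) + iII (pII y) from rfl, this]; abel
  have hφ' : ∀ y, dI (φ y) = -(φ (dII y)) := fun y => by
    have := LinearMap.ext_iff.mp hφ y; simp at this
    rw [eq_neg_iff_add_eq_zero, this]
  have hφd : ∀ y, φ (dII y) = -(dI (φ y)) := fun y => by rw [hφ' y, neg_neg]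
  have hpφd : ∀ y, pI (φ (dII y)) = 0 := fun y => by
    rw [hφd y]; simp [hpdI']
  have hKd : ∀ y, KII (dII y) = y - iII (pII y) - dII (KII y) := fun y => by
    rw [hKII' y]; abel
  have hpφK : ∀ y, pI (φ (KII (dII y))) = pI (φ y) - pI (φ (iII (pII y))) := fun y => by
    rw [hKd y, map_sub, map_sub, map_sub, map_sub, hpφd (KII y)]; abel
  intro dTot 𝔇 ic pc Kc
  refine ⟨?_, ?_, ?_, ?_, ?_, ?_, ?_, ?_, ?_⟩ <;>
    · ext z <;>
      simp [dTot, 𝔇, ic, pc, Kc, blockUpper, hdI', hdII', hpiI', hdiI', hpdI', hKiI',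
        hpKI', hKKI', hpiII', hdiII', hpdII', hKiII', hpKII', hKKII', hKI', hKII', hφ', hpφK, hpφd,
        sub_eq_iff_eq_add] <;>
      abel
end
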